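/- arXiv:2502.14330 — 3 statements merged into one kernel-verified Lean document; each statement's English description precedes it below -/
import Mathlib

section
/- Let G be a finite group and Γ = Cay(G,S) a quasi-abelian Cayley graph (S is a union of conjugacy classes, S⁻¹ = S, 1 ∉ S). Then for each irreducible character χ of G, λ_χ = (1/χ(1)) Σ_{s∈S} χ(s) is an eigenvalue of the adjacency matrix of Γ. -/
open CategoryTheory

/-- The adjacency matrix of the Cayley graph `Cay(G, S)`. -/
def cayleyAdj {G : Type} [Group G] [DecidableEq G] (S : Finset G) :
    Matrix G G ℂ :=
  fun x y => if y * x⁻¹ ∈ S then 1 else 0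

/-- For a quasi-abelian Cayley graph `Cay(G, S)` and an irreducible character
`χ` of `G`, the number `λ_χ = χ(1)⁻¹ Σ_{s ∈ S} χ(s)` is an eigenvalue of the
adjacency matrix. -/
theorem stmt11 {G : Type} [Group G] [Fintype G] [DecidableEq G] (S : Finset G)
    (hinv : ∀ s ∈ S, s⁻¹ ∈ S) (h1 : (1 : G) ∉ S)
    (hconj : ∀ s ∈ S, ∀ g : G, g * s * g⁻¹ ∈ S)
    (W : FDRep ℂ G) [Simple W] :
    ∃ v : G → ℂ, v ≠ 0 ∧ (cayleyAdj S).mulVec v =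
      ((W.character 1)⁻¹ * ∑ s ∈ S, W.character s) • v := by
  classical
  -- The central element `T = ∑_{s ∈ S} ρ(s)` commutes with the representation.
  let T : W →ₗ[ℂ] W := ∑ s ∈ S, W.ρ s
  have hcomm : ∀ g : G, (W.ρ g) ∘ₗ T = T ∘ₗ (W.ρ g) := by
    intro g
    ext v
    simp only [T, LinearMap.comp_apply, LinearMap.sum_apply, map_sum]
    have h1' : ∀ s : G, W.ρ g (W.ρ s v) = W.ρ (g * s) v := by
      intro s; rw [map_mul]; rfl
    have h2' : ∀ s : G, W.ρ s (W.ρ g v) = W.ρ (s * g) v := by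
      intro s; rw [map_mul]; rfl
    simp only [h1', h2']
    refine Finset.sum_bij' (fun s _ => g * s * g⁻¹) (fun s _ => g⁻¹ * s * g) ?_ ?_ ?_ ?_ ?_
    · intro s hs; exact hconj s hs g
    · intro s hs; simpa using hconj s hs g⁻¹
    · intro s hs; group
    · intro s hs; group
    · intro s hs; congr 1; group
  -- Schur's lemma: `T` is a scalar `c`.
  let f : W ⟶ W := ⟨ConcreteCategory.ofHom T, by intro g; ext v; exact congrArg (fun h => h v) (hcomm g).symm⟩
  obtain ⟨c, hc⟩ := CategoryTheory.endomorphism_simple_eq_smul_id (𝕜 := ℂ) f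
  have hT : T = c • LinearMap.id := by
    have := congrArg (fun φ => φ.hom.hom.hom) hc
    exact this.symm
  -- `χ(1) ≠ 0` since a simple object is nonzero.
  have hχ1 : W.character 1 ≠ 0 := by
    rw [FDRep.char_one]
    simp only [ne_eq, Nat.cast_eq_zero]
    intro h0
    have hsub : Subsingleton W := Module.finrank_zero_iff.mp h0
    exact CategoryTheory.id_nonzero W (by ext v; exact hsub.elim _ _)
  -- Taking traces identifies the scalar.
  have htr : ∑ s ∈ S, W.character s = c * W.character 1 := by
    have h := congrArg (LinearMap.trace ℂ W) hT
    simp only [T, map_sum, map_smul, LinearMap.trace_id] at h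
    rw [FDRep.char_one]
    simpa [FDRep.character, smul_eq_mul] using h
  have hc' : c = (W.character 1)⁻¹ * ∑ s ∈ S, W.character s := by
    rw [htr, mul_comm c, ← mul_assoc, inv_mul_cancel₀ hχ1, one_mul]
  -- The character itself is the eigenvector.
  refine ⟨W.character, ?_, ?_⟩
  · intro hv
    exact hχ1 (by rw [hv]; rfl)
  · rw [← hc']
    funext x
    have key : ∀ x : G, ∑ s ∈ S, W.character (s * x) = c * W.character x := by
      intro x
      have : ∀ s : G, W.character (s * x) = LinearMap.trace ℂ W ((W.ρ s) ∘ₗ (W.ρ x)) := by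
        intro s
        simp only [FDRep.character, map_mul]
        rfl
      simp only [this]
      have hsum : (T ∘ₗ W.ρ x) = ∑ s ∈ S, (W.ρ s ∘ₗ W.ρ x) := by
        ext v; simp [T, LinearMap.sum_apply]
      rw [← map_sum, ← hsum, hT]
      rw [LinearMap.smul_comp, LinearMap.id_comp, map_smul, smul_eq_mul]
      rfl
    calc (cayleyAdj S).mulVec W.character x
        = ∑ y : G, (if y * x⁻¹ ∈ S then (1:ℂ) else 0) * W.character y := rfl
      _ = ∑ y ∈ Finset.univ.filter (fun y => y * x⁻¹ ∈ S), W.character y := by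
          rw [Finset.sum_filter]
          exact Finset.sum_congr rfl (fun y _ => by split <;> simp
          )
      _ = ∑ s ∈ S, W.character (s * x) := by
          refine Finset.sum_bij' (fun y _ => y * x⁻¹) (fun s _ => s * x) ?_ ?_ ?_ ?_ ?_
          · intro y hy; simpa using (Finset.mem_filter.mp hy).2
          · intro s hs; simp [hs]
          · intro y hy; group
          · intro s hs; group
          · intro y hy; congr 1; group
      _ = c * W.character x := key x
      _ = (c • W.character) x := rfl
end

section
/- Let Γ = Cay(G,S) be a connected quasi-abelian Cayley graph over a finite group G. If there exist distinct vertices u, v, a time t, and complex numbers α, β with α ≠ 0, β ≠ 0, |α|²+|β|² = 1 such that exp(itA)e_u = α e_u + β e_v, then uv⁻¹ is a central element of G of order 2. -/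
namespace Stmt14Aux

set_option linter.unusedSectionVars false

variable {G : Type} [Group G] [Fintype G] [DecidableEq G]

/-- Left translation permutation matrix: `PL g • e_y = e_{g y}`. -/
def PL (g : G) : Matrix G G ℂ := Matrix.of fun x y => if x = g * y then 1 else 0

/-- Right translation permutation matrix. -/
def PR (g : G) : Matrix G G ℂ := Matrix.of fun x y => if x = y * g then 1 else 0

lemma PL_mul_apply (g : G) (M : Matrix G G ℂ) (x y : G) :
    (PL g * M) x y = M (g⁻¹ * x) y := by
  rw [Matrix.mul_apply]
  have key : ∀ z : G, (x = g * z) = (z = g⁻¹ * x) := by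
    intro z; rw [eq_iff_iff]
    constructor
    · rintro rfl; simp
    · rintro rfl; simp
  simp only [PL, Matrix.of_apply, key, boole_mul]
  simp

lemma mul_PL_apply (g : G) (M : Matrix G G ℂ) (x y : G) :
    (M * PL g) x y = M x (g * y) := by
  rw [Matrix.mul_apply]
  simp only [PL, Matrix.of_apply, mul_boole]
  simp

lemma PR_mul_apply (g : G) (M : Matrix G G ℂ) (x y : G) :
    (PR g * M) x y = M (x * g⁻¹) y := by
  rw [Matrix.mul_apply]
  have key : ∀ z : G, (x = z * g) = (z = x * g⁻¹) := by
    intro z; rw [eq_iff_iff]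
    constructor
    · rintro rfl; simp
    · rintro rfl; simp
  simp only [PR, Matrix.of_apply, key, boole_mul]
  simp

lemma mul_PR_apply (g : G) (M : Matrix G G ℂ) (x y : G) :
    (M * PR g) x y = M x (y * g) := by
  rw [Matrix.mul_apply]
  simp only [PR, Matrix.of_apply, mul_boole]
  simp

lemma PL_mul_PL (g h : G) : (PL g * PL h : Matrix G G ℂ) = PL (g * h) := by
  ext x y
  rw [PL_mul_apply]
  simp only [PL, Matrix.of_apply]
  congr 1
  rw [eq_iff_iff, mul_assoc]
  constructor
  · intro hh; rw [← hh]; simp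
  · rintro rfl; simp

lemma PR_mul_PR (g h : G) : (PR g * PR h : Matrix G G ℂ) = PR (h * g) := by
  ext x y
  rw [PR_mul_apply]
  simp only [PR, Matrix.of_apply]
  congr 1
  rw [eq_iff_iff]
  constructor
  · intro hh; rw [← mul_assoc, ← hh]; simp [mul_assoc]
  · rintro rfl; simp [mul_assoc]

lemma PL_one : (PL (1 : G) : Matrix G G ℂ) = 1 := by
  ext x y; simp [PL, Matrix.one_apply]

lemma PR_one : (PR (1 : G) : Matrix G G ℂ) = 1 := by
  ext x y; simp [PR, Matrix.one_apply]

/-- `PL g` as a unit. -/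
def PLu (g : G) : (Matrix G G ℂ)ˣ :=
  ⟨PL g, PL g⁻¹, by rw [PL_mul_PL]; simp [PL_one], by rw [PL_mul_PL]; simp [PL_one]⟩

/-- `PR g` as a unit. -/
def PRu (g : G) : (Matrix G G ℂ)ˣ :=
  ⟨PR g, PR g⁻¹, by rw [PR_mul_PR]; simp [PR_one], by rw [PR_mul_PR]; simp [PR_one]⟩

/-- A unit commuting with `M` commutes with `exp M`. -/
lemma units_comm_exp (U : (Matrix G G ℂ)ˣ) (M : Matrix G G ℂ)
    (h : (U : Matrix G G ℂ) * M = M * (U : Matrix G G ℂ)) :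
    (U : Matrix G G ℂ) * NormedSpace.exp M = NormedSpace.exp M * (U : Matrix G G ℂ) := by
  have h2 : (U : Matrix G G ℂ) * M * ((U⁻¹ : (Matrix G G ℂ)ˣ) : Matrix G G ℂ) = M := by
    rw [h, mul_assoc, Units.mul_inv, mul_one]
  have h3 := Matrix.exp_units_conj U M
  rw [h2] at h3
  calc (U : Matrix G G ℂ) * NormedSpace.exp M
      = (U : Matrix G G ℂ) * NormedSpace.exp M * ((U⁻¹ : (Matrix G G ℂ)ˣ) * U : Matrix G G ℂ) := by rw [Units.inv_mul, mul_one]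
    _ = NormedSpace.exp M * (U : Matrix G G ℂ) := by rw [← mul_assoc, ← h3]

end Stmt14Aux

open Stmt14Aux

open CategoryTheory

/-- If `(α,β)`-revival with `α ≠ 0`, `β ≠ 0` occurs on a connected
quasi-abelian Cayley graph `Cay(G, S)` from `u` to `v` at time `t`, then
`uv⁻¹` is a central element of `G` of order 2. -/
theorem stmt14 {G : Type} [Group G] [Fintype G] [DecidableEq G] (S : Finset G)
    (hinv : ∀ s ∈ S, s⁻¹ ∈ S) (h1 : (1 : G) ∉ S)
    (hconj : ∀ s ∈ S, ∀ g : G, g * s * g⁻¹ ∈ S)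
    (hconn : Subgroup.closure (S : Set G) = ⊤)
    (u v : G) (huv : u ≠ v) (t : ℝ)
    (α β : ℂ) (hα : α ≠ 0) (hβ : β ≠ 0)
    (hnorm : ‖α‖ ^ 2 + ‖β‖ ^ 2 = 1)
    (hfr : (NormedSpace.exp ((Complex.I * (t : ℂ)) • cayleyAdj S)).mulVec
        (Pi.single u 1 : G → ℂ) =
      α • (Pi.single u 1 : G → ℂ) + β • (Pi.single v 1 : G → ℂ)) :
    orderOf (u * v⁻¹) = 2 ∧ u * v⁻¹ ∈ Subgroup.center G := by
  classical
  set A := cayleyAdj S with hA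
  set M := (Complex.I * (t : ℂ)) • A with hM
  set E := NormedSpace.exp M with hEdef
  -- symmetry of A
  have hSiff : ∀ x y : G, (y * x⁻¹ ∈ S) ↔ (x * y⁻¹ ∈ S) := by
    intro x y
    constructor <;> intro h <;> · have := hinv _ h; simpa [mul_inv_rev] using this
  have hMsym : Matrix.transpose M = M := by
    ext x y
    simp only [Matrix.transpose_apply, hM, Matrix.smul_apply]
    congr 1
    simp only [hA, cayleyAdj]
    exact if_congr (hSiff y x) rfl rfl
  have hEsym : ∀ x y : G, E x y = E y x := by
    have hT : Matrix.transpose E = E := by rw [hEdef, ← Matrix.exp_transpose, hMsym]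
    intro x y
    have h2 : Matrix.transpose E x y = E x y := by rw [hT]
    rw [Matrix.transpose_apply] at h2
    exact h2.symm
  -- commutation with translations
  have hcommL : ∀ g : G, PL g * E = E * PL g := by
    intro g
    refine units_comm_exp (PLu g) M ?_
    ext x y
    show (PL g * M) x y = (M * PL g) x y
    rw [PL_mul_apply, mul_PL_apply]
    simp only [hM, Matrix.smul_apply]
    congr 1
    simp only [hA, cayleyAdj]
    refine if_congr ?_ rfl rfl
    constructor
    · intro h
      have key : (g * y) * x⁻¹ = g * (y * (g⁻¹ * x)⁻¹) * g⁻¹ := by group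
      rw [key]; exact hconj _ h g
    · intro h
      have key : y * (g⁻¹ * x)⁻¹ = g⁻¹ * ((g * y) * x⁻¹) * (g⁻¹)⁻¹ := by group
      rw [key]; exact hconj _ h g⁻¹
  have hcommR : ∀ g : G, PR g * E = E * PR g := by
    intro g
    refine units_comm_exp (PRu g) M ?_
    ext x y
    show (PR g * M) x y = (M * PR g) x y
    rw [PR_mul_apply, mul_PR_apply]
    simp only [hM, Matrix.smul_apply]
    congr 1
    simp only [hA, cayleyAdj]
    have key : y * (x * g⁻¹)⁻¹ = (y * g) * x⁻¹ := by group
    rw [key]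
  -- entrywise invariances
  have EL : ∀ g x y : G, E x (g * y) = E (g⁻¹ * x) y := by
    intro g x y
    have h2 : (PL g * E) x y = (E * PL g) x y := by rw [hcommL g]
    rw [PL_mul_apply, mul_PL_apply] at h2
    exact h2.symm
  have ER : ∀ g x y : G, E x (y * g) = E (x * g⁻¹) y := by
    intro g x y
    have h2 : (PR g * E) x y = (E * PR g) x y := by rw [hcommR g]
    rw [PR_mul_apply, mul_PR_apply] at h2
    exact h2.symm
  -- the column at u
  have hE : ∀ x : G, E x u = (if x = u then α else 0) + (if x = v then β else 0) := by
    intro x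
    rw [Matrix.mulVec_single] at hfr
    have h0 := congrFun hfr x
    simp only [mul_one, Pi.add_apply, Pi.smul_apply, Pi.single_apply, smul_eq_mul,
      mul_ite, mul_one, mul_zero] at h0
    simpa [Matrix.col_apply] using h0
  have colL : ∀ g x : G, E x (g * u) =
      (if x = g * u then α else 0) + (if x = g * v then β else 0) := by
    intro g x
    rw [EL g x u, hE]
    congr 1 <;> exact if_congr inv_mul_eq_iff_eq_mul rfl rfl
  have colR : ∀ h x : G, E x (u * h) =
      (if x = u * h then α else 0) + (if x = v * h then β else 0) := by
    intro h x
    rw [ER h x u, hE]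
    congr 1 <;> exact if_congr mul_inv_eq_iff_eq_mul rfl rfl
  -- step A : u = v * (u⁻¹ * v)
  have hvu : E u v = β := by
    rw [hEsym u v, hE v, if_neg (fun h => huv h.symm), if_pos rfl, zero_add]
  have hre : u = v * (u⁻¹ * v) := by
    have h2 := colR (u⁻¹ * v) u
    rw [show u * (u⁻¹ * v) = v from by group] at h2
    rw [hvu, if_neg huv, zero_add] at h2
    by_contra hne
    rw [if_neg hne] at h2; exact hβ h2
  -- step B : ∀ w, w * u⁻¹ * v = v * (u⁻¹ * w)
  have hcen : ∀ w : G, w * u⁻¹ * v = v * (u⁻¹ * w) := by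
    intro w
    have hxw : w * u⁻¹ * v ≠ w := by
      intro hh
      apply huv
      have : v = u := by
        have := hh
        calc v = (w * u⁻¹)⁻¹ * (w * u⁻¹ * v) := by group
          _ = (w * u⁻¹)⁻¹ * w := by rw [hh]
          _ = u := by group
      exact this.symm
    have h2 := colL (w * u⁻¹) (w * u⁻¹ * v)
    rw [show (w * u⁻¹) * u = w from by group] at h2
    rw [if_neg hxw, if_pos rfl, zero_add] at h2
    have h3 := colR (u⁻¹ * w) (w * u⁻¹ * v)
    rw [show u * (u⁻¹ * w) = w from by group] at h3
    rw [if_neg hxw, zero_add, h2] at h3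
    by_contra hne
    rw [if_neg (by intro hh; exact hne (by rw [hh]))] at h3
    exact hβ h3
  -- conclude
  have h1c : u⁻¹ * v = v * u⁻¹ := by
    have := hcen 1; simpa using this
  have hcc : u * v⁻¹ = u⁻¹ * v := by
    conv_lhs => rw [hre]
    have : v * (u⁻¹ * v) * v⁻¹ = v * u⁻¹ := by group
    rw [this, ← h1c]
  have hsq : (u * v⁻¹) ^ 2 = 1 := by
    rw [pow_two, hcc]
    calc (u⁻¹ * v) * (u⁻¹ * v) = u⁻¹ * (v * (u⁻¹ * v)) := by group
      _ = 1 := by rw [← hre]; group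
  have hne1 : u * v⁻¹ ≠ 1 := fun h => huv (by rwa [mul_inv_eq_one] at h)
  refine ⟨orderOf_eq_prime hsq hne1, ?_⟩
  rw [Subgroup.mem_center_iff]
  intro g
  rw [hcc]
  calc g * (u⁻¹ * v) = g * u⁻¹ * v := by group
    _ = v * (u⁻¹ * g) := hcen g
    _ = (v * u⁻¹) * g := by group
    _ = (u⁻¹ * v) * g := by rw [← h1c]
end

section
/- Let G be a finite group, a ∈ G central of order 2, and suppose for every irreducible character χ: exp(it λ_χ) = α+β if χ(a) = χ(1) and exp(it λ_χ) = α-β if χ(a) = -χ(1), where λ_χ = (1/χ(1)) Σ_{s∈S} χ(s) for a union of conjugacy classes S with 1 ∉ S, S⁻¹ = S. Then for Γ = Cay(G,S), H(t)_{u,u} = α and H(t)_{u,ua} = β for every u ∈ G, where H(t) = exp(itA). -/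
open CategoryTheory

open CategoryTheory Module

namespace Stmt16Aux

noncomputable section

variable {G : Type} [Group G]

/-- Build an endomorphism of a representation from a commuting linear map. -/
def homOfComm (V : FDRep ℂ G) (f : V →ₗ[ℂ] V)
    (hf : ∀ g : G, f ∘ₗ V.ρ g = V.ρ g ∘ₗ f) : V ⟶ V :=
  ⟨InducedCategory.homMk (ModuleCat.ofHom f), fun g => by ext x; exact LinearMap.congr_fun (hf g) x⟩

lemma schur_scalar (V : FDRep ℂ G) [Simple V] (f : V →ₗ[ℂ] V)
    (hf : ∀ g : G, f ∘ₗ V.ρ g = V.ρ g ∘ₗ f) : ∃ c : ℂ, f = c • LinearMap.id := by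
  obtain ⟨c, hc⟩ := endomorphism_simple_eq_smul_id ℂ (homOfComm V f hf)
  refine ⟨c, ?_⟩
  have h2 := congrArg (fun φ => φ.hom.hom.hom) hc
  exact h2.symm

lemma nontrivial_of_simple (V : FDRep ℂ G) [Simple V] : Nontrivial V := by
  by_contra h
  have hs : Subsingleton V := not_nontrivial_iff_subsingleton.mp h
  have : (𝟙 V : V ⟶ V) = 0 := by
    apply Action.Hom.ext
    ext x
    exact @Subsingleton.elim _ hs _ _
  exact CategoryTheory.id_nonzero V this

lemma finrank_pos_of_simple (V : FDRep ℂ G) [Simple V] : 0 < finrank ℂ V :=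
  have := nontrivial_of_simple V
  Module.finrank_pos

lemma char_one_ne_zero (V : FDRep ℂ G) [Simple V] : V.character 1 ≠ 0 := by
  rw [FDRep.char_one]
  exact_mod_cast (finrank_pos_of_simple V).ne'

lemma exists_scalar (V : FDRep ℂ G) [Simple V] [Fintype G] (T : Finset G) (w : G → ℂ)
    (hcomm : ∀ g : G, (∑ h ∈ T, w h • (V.ρ h : V →ₗ[ℂ] V)) ∘ₗ V.ρ g
      = V.ρ g ∘ₗ (∑ h ∈ T, w h • (V.ρ h : V →ₗ[ℂ] V))) :
    ∃ c : ℂ, (∑ h ∈ T, w h • (V.ρ h : V →ₗ[ℂ] V)) = c • LinearMap.id ∧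
      ∑ h ∈ T, w h * V.character h = c * V.character 1 := by
  obtain ⟨c, hc⟩ := schur_scalar V _ hcomm
  refine ⟨c, hc, ?_⟩
  have := congrArg (LinearMap.trace ℂ V) hc
  simpa [FDRep.character, FDRep.char_one, mul_comm] using this

end

end Stmt16Aux

namespace Stmt16Aux

noncomputable section

variable {G : Type} [Group G]

lemma ρ_comp (V : FDRep ℂ G) (a g : G) :
    (V.ρ a : V →ₗ[ℂ] V) ∘ₗ V.ρ g = V.ρ (a * g) := by rw [map_mul]; rfl

/-- central involution acts with character ±(character 1) -/
lemma char_pm (V : FDRep ℂ G) [Simple V] (a : G) (ha : ∀ g, a * g = g * a)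
    (h2 : a * a = 1) : V.character a = V.character 1 ∨ V.character a = -V.character 1 := by
  obtain ⟨c, hc⟩ := schur_scalar V (V.ρ a) (fun g => by
    rw [ρ_comp, ρ_comp, ha g])
  have hd : V.character a = c * V.character 1 := by
    have := congrArg (LinearMap.trace ℂ V) hc
    simpa [FDRep.character, FDRep.char_one] using this
  have hsq : c * c = 1 := by
    have h1 : (V.ρ a : V →ₗ[ℂ] V) ∘ₗ V.ρ a = LinearMap.id := by
      rw [ρ_comp, h2, map_one]; rfl
    rw [hc] at h1
    have := nontrivial_of_simple V
    obtain ⟨x, hx⟩ := exists_ne (0 : V)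
    have h3 := LinearMap.congr_fun h1 x
    simp only [LinearMap.comp_apply, LinearMap.smul_apply, LinearMap.id_apply,
      smul_smul] at h3
    have h4 : (c * c - 1) • x = 0 := by rw [sub_smul, one_smul, h3, sub_self]
    rcases smul_eq_zero.mp h4 with h | h
    · exact sub_eq_zero.mp h
    · exact absurd h hx
  rcases mul_self_eq_one_iff.mp hsq with h | h
  · left; rw [hd, h, one_mul]
  · right; rw [hd, h, neg_one_mul]

end

end Stmt16Aux

namespace Stmt16Aux

noncomputable section

variable {G : Type} [Group G]

lemma sum_smul_comp (V : FDRep ℂ G) [Fintype G] (T : Finset G) (w : G → ℂ) (g : G) :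
    (∑ h ∈ T, w h • (V.ρ h : V →ₗ[ℂ] V)) ∘ₗ V.ρ g = ∑ h ∈ T, w h • (V.ρ (h * g) : V →ₗ[ℂ] V) := by
  rw [show (∑ h ∈ T, w h • (V.ρ h : V →ₗ[ℂ] V)) ∘ₗ V.ρ g
      = (∑ h ∈ T, w h • (V.ρ h : V →ₗ[ℂ] V)) * V.ρ g from rfl, Finset.sum_mul]
  exact Finset.sum_congr rfl fun h _ => by rw [smul_mul_assoc, ← map_mul]

lemma comp_sum_smul (V : FDRep ℂ G) [Fintype G] (T : Finset G) (w : G → ℂ) (g : G) :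
    (V.ρ g : V →ₗ[ℂ] V) ∘ₗ (∑ h ∈ T, w h • (V.ρ h : V →ₗ[ℂ] V)) = ∑ h ∈ T, w h • (V.ρ (g * h) : V →ₗ[ℂ] V) := by
  rw [show (V.ρ g : V →ₗ[ℂ] V) ∘ₗ (∑ h ∈ T, w h • (V.ρ h : V →ₗ[ℂ] V))
      = V.ρ g * (∑ h ∈ T, w h • (V.ρ h : V →ₗ[ℂ] V)) from rfl, Finset.mul_sum]
  exact Finset.sum_congr rfl fun h _ => by rw [mul_smul_comm, ← map_mul]

lemma trace_sum_smul (V : FDRep ℂ G) [Fintype G] (T : Finset G) (w : G → ℂ) (f : G → G) :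
    LinearMap.trace ℂ V (∑ h ∈ T, w h • (V.ρ (f h) : V →ₗ[ℂ] V)) =
      ∑ h ∈ T, w h * V.character (f h) := by
  rw [map_sum]
  exact Finset.sum_congr rfl fun h _ => by rw [map_smul, smul_eq_mul]; rfl

lemma char_S_mul (V : FDRep ℂ G) [Simple V] [Fintype G] (S : Finset G)
    (hconj : ∀ s ∈ S, ∀ (g : G), g * s * g⁻¹ ∈ S) (g : G) :
    V.character 1 * ∑ s ∈ S, V.character (s * g) =
      (∑ s ∈ S, V.character s) * V.character g := by
  obtain ⟨c, hB, htr⟩ := exists_scalar V S (fun _ => (1:ℂ)) (fun x => by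
    rw [sum_smul_comp, comp_sum_smul]
    refine Finset.sum_nbij' (fun s => x⁻¹ * s * x) (fun s => x * s * x⁻¹)
      (fun s hs => by simpa using hconj s hs x⁻¹) (fun s hs => hconj s hs x)
      (fun s _ => by group) (fun s _ => by group) (fun s _ => by
        congr 1; group))
  have key : ∑ s ∈ S, V.character (s * g) = c * V.character g := by
    have h1 := congrArg (fun f => LinearMap.trace ℂ V (f ∘ₗ (V.ρ g : V →ₗ[ℂ] V))) hB
    rw [sum_smul_comp, trace_sum_smul, LinearMap.smul_comp, LinearMap.id_comp,
      map_smul, smul_eq_mul] at h1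
    simpa [FDRep.character] using h1
  simp only [one_mul] at htr
  rw [key, htr]; ring

lemma conv_char (V W : FDRep ℂ G) [Simple V] [Simple W] [Fintype G] (g : G) :
    V.character 1 * ∑ h : G, W.character (g * h⁻¹) * V.character h =
      (∑ h : G, W.character h⁻¹ * V.character h) * V.character g := by
  obtain ⟨c, hB, htr⟩ := exists_scalar V Finset.univ (fun h => W.character h⁻¹) (fun x => by
    rw [sum_smul_comp, comp_sum_smul]
    refine Finset.sum_nbij' (fun h => x⁻¹ * h * x) (fun h => x * h * x⁻¹)
      (fun h _ => Finset.mem_univ _) (fun h _ => Finset.mem_univ _)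
      (fun h _ => by group) (fun h _ => by group) (fun h _ => ?_)
    have hchi : W.character (x⁻¹ * h * x)⁻¹ = W.character h⁻¹ := by
      rw [show (x⁻¹ * h * x)⁻¹ = x⁻¹ * h⁻¹ * x⁻¹⁻¹ by group]
      exact FDRep.char_conj W _ x⁻¹
    rw [hchi]
    congr 1
    group)
  have key : ∑ h : G, W.character (g * h⁻¹) * V.character h = c * V.character g := by
    have h1 := congrArg (fun f => LinearMap.trace ℂ V (f ∘ₗ (V.ρ g : V →ₗ[ℂ] V))) hB
    rw [sum_smul_comp, trace_sum_smul, LinearMap.smul_comp, LinearMap.id_comp,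
      map_smul, smul_eq_mul] at h1
    have h2 : ∑ h : G, W.character (g * h⁻¹) * V.character h =
        ∑ h : G, W.character h⁻¹ * V.character (h * g) := by
      refine Finset.sum_nbij' (fun h => h * g⁻¹) (fun h => h * g)
        (fun h _ => Finset.mem_univ _) (fun h _ => Finset.mem_univ _)
        (fun h _ => by group) (fun h _ => by group) (fun h _ => ?_)
      congr 2
      · group
      · group
    rw [h2, h1]
    rfl
  rw [key, htr]; ring

end

end Stmt16Aux

namespace Stmt16Aux

noncomputable section

variable {G : Type} [Group G]

open scoped Classical in
lemma orth_sum [Fintype G] (V W : FDRep ℂ G) [Simple V] [Simple W] :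
    ∑ h : G, W.character h⁻¹ * V.character h =
      if Nonempty (V ≅ W) then (Fintype.card G : ℂ) else 0 := by
  have h := FDRep.char_orthonormal V W
  have hc : (Nat.card G : ℂ) ≠ 0 := by exact_mod_cast Nat.card_pos.ne'
  have h2 : ∑ g : G, V.character g * W.character g⁻¹
      = if Nonempty (V ≅ W) then (Fintype.card G : ℂ) else 0 := by
    rw [inv_mul_eq_iff_eq_mul₀ hc] at h
    rw [h, Nat.card_eq_fintype_card]
    split <;> simp
  rw [show ∑ h : G, W.character h⁻¹ * V.character h
      = ∑ g : G, V.character g * W.character g⁻¹ from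
    Finset.sum_congr rfl fun h _ => mul_comm _ _, h2]

/-- Restriction of a representation to an invariant submodule. -/
def subRep {Vt : Type} [AddCommGroup Vt] [Module ℂ Vt] (ρ : Representation ℂ G Vt)
    (U : Submodule ℂ Vt) (hU : ∀ g : G, ∀ x ∈ U, ρ g x ∈ U) : Representation ℂ G U where
  toFun g := (ρ g).restrict (fun x hx => hU g x hx)
  map_one' := by ext x; simp [LinearMap.restrict_apply]
  map_mul' g h := by
    ext x
    simp [LinearMap.restrict_apply, map_mul]

@[simp] lemma subRep_apply {Vt : Type} [AddCommGroup Vt] [Module ℂ Vt]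
    (ρ : Representation ℂ G Vt) (U : Submodule ℂ Vt)
    (hU : ∀ g : G, ∀ x ∈ U, ρ g x ∈ U) (g : G) (x : U) :
    (subRep ρ U hU g x : Vt) = ρ g (x : Vt) := rfl

/-- The inclusion of an invariant submodule as a morphism of representations. -/
def inclHom (W : FDRep ℂ G) (U : Submodule ℂ W)
    (hU : ∀ g : G, ∀ x ∈ U, W.ρ g x ∈ U) : FDRep.of (subRep W.ρ U hU) ⟶ W :=
  ⟨InducedCategory.homMk (ModuleCat.ofHom U.subtype), fun g => by
    ext x
    rfl⟩

lemma simple_of_irreducible {Vt : Type} [AddCommGroup Vt] [Module ℂ Vt]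
    [FiniteDimensional ℂ Vt] (ρ : Representation ℂ G Vt) (hnt : Nontrivial Vt)
    (hirr : ∀ Z : Submodule ℂ Vt, (∀ (g : G), ∀ x ∈ Z, ρ g x ∈ Z) → Z = ⊥ ∨ Z = ⊤) :
    Simple (FDRep.of ρ) := by
  constructor
  intro Y f hmono
  constructor
  · intro hiso hf0
    have hid : (𝟙 (FDRep.of ρ) : FDRep.of ρ ⟶ FDRep.of ρ) = 0 := by
      have h4 : inv f ≫ f = inv f ≫ 0 := congrArg (fun z => inv f ≫ z) hf0
      rw [IsIso.inv_hom_id, Limits.comp_zero] at h4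
      exact h4
    have hid2 : (LinearMap.id : Vt →ₗ[ℂ] Vt) = 0 := congrArg (fun φ => φ.hom.hom.hom) hid
    obtain ⟨x, hx⟩ := exists_ne (0 : Vt)
    exact hx (by simpa using LinearMap.congr_fun hid2 x)
  · intro hf
    have hcomm : ∀ g : G, (f.hom.hom.hom : (Y : Type) →ₗ[ℂ] Vt) ∘ₗ Y.ρ g
        = ρ g ∘ₗ (f.hom.hom.hom : (Y : Type) →ₗ[ℂ] Vt) := fun g => congrArg (fun φ => φ.hom.hom) (f.comm g)
    -- range is invariant, nonzero, hence ⊤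
    have hrange : LinearMap.range (f.hom.hom.hom : (Y : Type) →ₗ[ℂ] Vt) = ⊤ := by
      have hinv : ∀ (g : G), ∀ x ∈ LinearMap.range (f.hom.hom.hom : (Y : Type) →ₗ[ℂ] Vt),
          ρ g x ∈ LinearMap.range (f.hom.hom.hom : (Y : Type) →ₗ[ℂ] Vt) := by
        rintro g x ⟨y, rfl⟩
        exact ⟨Y.ρ g y, LinearMap.congr_fun (hcomm g) y⟩
      rcases hirr (LinearMap.range f.hom.hom.hom) (fun g x hx => hinv g x hx) with h | h
      · exfalso
        exact hf (by
          apply Action.Hom.ext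
          ext x
          exact LinearMap.congr_fun (LinearMap.range_eq_bot.mp h) x)
      · exact h
    -- kernel is invariant under Y.ρ; use mono to show it's ⊥
    have hker : LinearMap.ker (f.hom.hom.hom : (Y : Type) →ₗ[ℂ] Vt) = ⊥ := by
      set K := LinearMap.ker (f.hom.hom.hom : (Y : Type) →ₗ[ℂ] Vt) with hK
      have hKinv : ∀ g : G, ∀ x ∈ K, Y.ρ g x ∈ K := by
        intro g x hx
        have := LinearMap.congr_fun (hcomm g) x
        simp only [LinearMap.comp_apply] at this
        simp only [hK, LinearMap.mem_ker] at hx ⊢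
        calc (f.hom.hom.hom : (Y : Type) →ₗ[ℂ] Vt) (Y.ρ g x) = ρ g (f.hom.hom.hom x) :=
              LinearMap.congr_fun (hcomm g) x
          _ = 0 := by rw [hx, map_zero]
      have hcomp : inclHom Y K hKinv ≫ f
          = (0 : FDRep.of (subRep Y.ρ K hKinv) ⟶ Y) ≫ f := by
        rw [Limits.zero_comp]
        apply Action.Hom.ext
        apply FGModuleCat.hom_ext
        show (f.hom.hom.hom : (Y : Type) →ₗ[ℂ] Vt) ∘ₗ K.subtype = 0
        ext ⟨x, hx⟩
        exact hx
      have h0 := (cancel_mono f).mp hcomp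
      rw [eq_bot_iff]
      intro x hx
      have : K.subtype ⟨x, hx⟩ = 0 := by
        have := congrArg (fun φ => φ.hom.hom.hom) h0
        exact LinearMap.congr_fun this ⟨x, hx⟩
      simpa using this
    -- f.hom.hom.hom is a bijection; build the inverse
    have hbij : Function.Bijective (f.hom.hom.hom : (Y : Type) →ₗ[ℂ] Vt) :=
      ⟨LinearMap.ker_eq_bot.mp hker, LinearMap.range_eq_top.mp hrange⟩
    let e : (Y : Type) ≃ₗ[ℂ] Vt := LinearEquiv.ofBijective _ hbij
    have hfl : ∀ y : (Y : Type), e y = f.hom.hom.hom y := fun y => rfl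
    have hcomm' : ∀ g : G, (e.symm.toLinearMap) ∘ₗ ρ g = Y.ρ g ∘ₗ e.symm.toLinearMap := by
      intro g
      ext x
      show e.symm (ρ g x) = Y.ρ g (e.symm x)
      apply hbij.injective
      show f.hom.hom.hom (e.symm (ρ g x)) = f.hom.hom.hom (Y.ρ g (e.symm x))
      calc (f.hom.hom.hom : (Y : Type) →ₗ[ℂ] Vt) (e.symm (ρ g x))
          = e (e.symm (ρ g x)) := (hfl _).symm
        _ = ρ g x := e.apply_symm_apply _
        _ = ρ g (e (e.symm x)) := by rw [e.apply_symm_apply]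
        _ = ρ g (f.hom.hom.hom (e.symm x)) := by rw [hfl]
        _ = f.hom.hom.hom (Y.ρ g (e.symm x)) := (LinearMap.congr_fun (hcomm g) _).symm
    refine ⟨⟨⟨InducedCategory.homMk (ModuleCat.ofHom e.symm.toLinearMap), fun g => by ext x; exact LinearMap.congr_fun (hcomm' g) x⟩, ?_, ?_⟩⟩
    · apply Action.Hom.ext
      apply FGModuleCat.hom_ext
      show e.symm.toLinearMap ∘ₗ (f.hom.hom.hom : (Y : Type) →ₗ[ℂ] Vt) = LinearMap.id
      ext y
      show e.symm (f.hom.hom.hom y) = y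
      rw [← hfl, e.symm_apply_apply]
    · apply Action.Hom.ext
      apply FGModuleCat.hom_ext
      show (f.hom.hom.hom : (Y : Type) →ₗ[ℂ] Vt) ∘ₗ e.symm.toLinearMap = LinearMap.id
      ext x
      show f.hom.hom.hom (e.symm x) = x
      rw [← hfl, e.apply_symm_apply]

end

end Stmt16Aux

namespace Stmt16Aux

noncomputable section

open scoped Classical

variable {G : Type} [Group G] [Fintype G] [DecidableEq G]

/-- The projection-type matrix attached to an irreducible character. -/
def Pmat (V : FDRep ℂ G) : Matrix G G ℂ :=
  fun u v => V.character 1 / (Fintype.card G : ℂ) * V.character (u * v⁻¹)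

lemma card_ne_zero' : ((Fintype.card G : ℂ)) ≠ 0 := by
  exact_mod_cast Fintype.card_ne_zero

lemma Pmat_mul (V W : FDRep ℂ G) [Simple V] [Simple W] :
    Pmat V * Pmat W = if Nonempty (W ≅ V) then Pmat V else 0 := by
  ext u v
  rw [Matrix.mul_apply]
  have step1 : ∑ w : G, Pmat V u w * Pmat W w v
      = (V.character 1 / (Fintype.card G : ℂ)) * (W.character 1 / (Fintype.card G : ℂ)) *
        ∑ h : G, V.character ((u * v⁻¹) * h⁻¹) * W.character h := by
    rw [Finset.mul_sum]
    refine Finset.sum_nbij' (fun w => w * v⁻¹) (fun h => h * v)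
      (fun w _ => Finset.mem_univ _) (fun h _ => Finset.mem_univ _)
      (fun w _ => by group) (fun h _ => by group) (fun w _ => ?_)
    show Pmat V u w * Pmat W w v = _
    unfold Pmat
    have h1 : u * v⁻¹ * (w * v⁻¹)⁻¹ = u * w⁻¹ := by group
    rw [h1]
    ring
  rw [step1]
  have step2 := conv_char W V (u * v⁻¹)
  have step3 := orth_sum (V := W) (W := V)
  -- step2 : W.character 1 * ∑ h, V.character ((u*v⁻¹) * h⁻¹) * W.character h
  --           = (∑ h, V.character h⁻¹ * W.character h) * W.character (u*v⁻¹)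
  rw [step3] at step2
  have hW1 : W.character 1 ≠ 0 := char_one_ne_zero W
  have hc : ((Fintype.card G : ℂ)) ≠ 0 := card_ne_zero'
  have hV1 : V.character 1 ≠ 0 := char_one_ne_zero V
  by_cases hiso : Nonempty (W ≅ V)
  · have hchar : W.character = V.character := FDRep.char_iso (Classical.choice hiso)
    rw [if_pos hiso] at step2 ⊢
    have hsum : ∑ h : G, V.character ((u * v⁻¹) * h⁻¹) * W.character h
        = (Fintype.card G : ℂ) * W.character (u * v⁻¹) / W.character 1 :=
      eq_div_of_mul_eq hW1 (by linear_combination step2)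
    rw [hsum]
    show _ = Pmat V u v
    unfold Pmat
    rw [show W.character (u * v⁻¹) = V.character (u * v⁻¹) from congrFun hchar _,
        show W.character 1 = V.character 1 from congrFun hchar 1]
    have key : ∀ (d c χ : ℂ), d ≠ 0 → c ≠ 0 → d / c * (d / c) * (c * χ / d) = d / c * χ := by
      intro d c χ hd hc
      field_simp
    exact key _ _ _ hV1 hc
  · rw [if_neg hiso] at step2 ⊢
    have h0 : W.character 1 * (∑ h : G, V.character ((u * v⁻¹) * h⁻¹) * W.character h) = 0 := by
      rw [step2, zero_mul]
    have hsum : ∑ h : G, V.character ((u * v⁻¹) * h⁻¹) * W.character h = 0 := by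
      rcases mul_eq_zero.mp h0 with h | h
      · exact absurd h hW1
      · exact h
    rw [hsum, mul_zero]
    rfl

end

end Stmt16Aux

/-- Local copy of the Cayley adjacency matrix. -/
def cayleyAdjAux {G : Type} [Group G] [DecidableEq G] (S : Finset G) :
    Matrix G G ℂ :=
  fun x y => if y * x⁻¹ ∈ S then 1 else 0

namespace Stmt16Aux

noncomputable section

open scoped Classical

set_option linter.unusedSectionVars false

variable {G : Type} [Group G] [Fintype G] [DecidableEq G]

lemma A_mul_Pmat (S : Finset G) (hconj : ∀ s ∈ S, ∀ (g : G), g * s * g⁻¹ ∈ S)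
    (V : FDRep ℂ G) [Simple V] :
    cayleyAdjAux S * Pmat V
      = (((V.character 1)⁻¹ * ∑ s ∈ S, V.character s) • Pmat V : Matrix G G ℂ) := by
  have hV1 : V.character 1 ≠ 0 := char_one_ne_zero V
  ext u v
  rw [Matrix.mul_apply, Matrix.smul_apply]
  have step1 : ∑ w : G, cayleyAdjAux S u w * Pmat V w v
      = ∑ s ∈ S, V.character 1 / (Fintype.card G : ℂ) * V.character (s * (u * v⁻¹)) := by
    have h1 : ∀ w : G, cayleyAdjAux S u w * Pmat V w v
        = if w * u⁻¹ ∈ S then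
            V.character 1 / (Fintype.card G : ℂ) * V.character (w * v⁻¹) else 0 := by
      intro w
      unfold cayleyAdjAux Pmat
      split <;> simp
    simp_rw [h1]
    rw [← Finset.sum_filter]
    refine Finset.sum_nbij' (fun w => w * u⁻¹) (fun s => s * u)
      (fun w hw => (Finset.mem_filter.mp hw).2) (fun s hs => by
        simp only [Finset.mem_filter, Finset.mem_univ, true_and]
        simpa using hs)
      (fun w _ => by group) (fun s _ => by group) (fun w _ => by
        congr 1
        group)
  rw [step1]
  have step2 := char_S_mul V S hconj (u * v⁻¹)
  -- step2 : χ1 * Σ_s χ(s * (u v⁻¹)) = (Σ_s χ s) * χ (u v⁻¹)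
  have step3 : ∑ s ∈ S, V.character (s * (u * v⁻¹))
      = (∑ s ∈ S, V.character s) * V.character (u * v⁻¹) / V.character 1 :=
    eq_div_of_mul_eq hV1 (by linear_combination step2)
  rw [← Finset.mul_sum, step3]
  unfold Pmat
  have hc : ((Fintype.card G : ℂ)) ≠ 0 := card_ne_zero'
  simp only [smul_eq_mul]
  field_simp

/-- The right regular representation on functions `G → ℂ`. -/
def rhoReg : Representation ℂ G (G → ℂ) where
  toFun g := LinearMap.funLeft ℂ ℂ (fun x => x * g)
  map_one' := by
    ext f x
    simp [LinearMap.funLeft]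
  map_mul' g h := LinearMap.ext fun f => funext fun x => by
    simp [LinearMap.funLeft, Function.comp, mul_assoc]

@[simp] lemma rhoReg_apply (g : G) (f : G → ℂ) (x : G) : rhoReg g f x = f (x * g) := rfl

/-- Matrices whose entries depend only on `u * v⁻¹` commute with the regular action. -/
lemma mulVec_rhoReg_comm (M : Matrix G G ℂ) (hM : ∀ (u v g : G), M (u * g) (v * g) = M u v)
    (g : G) (f : G → ℂ) : M.mulVec (rhoReg g f) = rhoReg g (M.mulVec f) := by
  funext u
  show ∑ v : G, M u v * f (v * g) = ∑ v : G, M (u * g) v * f v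
  refine Finset.sum_nbij' (fun v => v * g) (fun v => v * g⁻¹)
    (fun v _ => Finset.mem_univ _) (fun v _ => Finset.mem_univ _)
    (fun v _ => by group) (fun v _ => by group) (fun v _ => by rw [hM u v g])

lemma Pmat_inv_entries (V : FDRep ℂ G) (u v g : G) :
    Pmat V (u * g) (v * g) = Pmat V u v := by
  unfold Pmat
  congr 2
  group

/-- Pointwise formula for `Pmat` acting on a function. -/
lemma Pmat_mulVec (V : FDRep ℂ G) (f : G → ℂ) (u : G) :
    (Pmat V).mulVec f u
      = ∑ g : G, V.character 1 / (Fintype.card G : ℂ) * V.character g⁻¹ * f (u * g) := by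
  show ∑ v : G, Pmat V u v * f v = _
  refine Finset.sum_nbij' (fun v => u⁻¹ * v) (fun g => u * g)
    (fun v _ => Finset.mem_univ _) (fun g _ => Finset.mem_univ _)
    (fun v _ => by group) (fun g _ => by group) (fun v _ => ?_)
  have hchi : V.character (u * v⁻¹) = V.character ((u⁻¹ * v)⁻¹) := by
    rw [show (u⁻¹ * v)⁻¹ = u⁻¹ * (u * v⁻¹) * u⁻¹⁻¹ by group]
    exact (FDRep.char_conj V _ u⁻¹).symm
  unfold Pmat
  show V.character 1 / (Fintype.card G : ℂ) * V.character (u * v⁻¹) * f v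
      = V.character 1 / (Fintype.card G : ℂ) * V.character (u⁻¹ * v)⁻¹ * f (u * (u⁻¹ * v))
  rw [show u * (u⁻¹ * v) = v by group, hchi]

end

end Stmt16Aux

namespace Stmt16Aux

noncomputable section

open scoped Classical

set_option linter.unusedSectionVars false

variable {G : Type} [Group G] [Fintype G] [DecidableEq G]

lemma conv_comm (V W : FDRep ℂ G) (x : G) :
    (∑ h : G, W.character h⁻¹ • (V.ρ h : V →ₗ[ℂ] V)) ∘ₗ V.ρ x
      = V.ρ x ∘ₗ (∑ h : G, W.character h⁻¹ • (V.ρ h : V →ₗ[ℂ] V)) := by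
  rw [sum_smul_comp, comp_sum_smul]
  refine Finset.sum_nbij' (fun h => x⁻¹ * h * x) (fun h => x * h * x⁻¹)
    (fun h _ => Finset.mem_univ _) (fun h _ => Finset.mem_univ _)
    (fun h _ => by group) (fun h _ => by group) (fun h _ => ?_)
  have hchi : W.character (x⁻¹ * h * x)⁻¹ = W.character h⁻¹ := by
    rw [show (x⁻¹ * h * x)⁻¹ = x⁻¹ * h⁻¹ * x⁻¹⁻¹ by group]
    exact FDRep.char_conj W _ x⁻¹
  rw [hchi]
  congr 1
  group

lemma pi_scalar (V W : FDRep ℂ G) [Simple V] [Simple W] (hiso : Nonempty (V ≅ W)) (y : V) :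
    ∑ g : G, W.character g⁻¹ • ((V.ρ g : V →ₗ[ℂ] V) y)
      = ((Fintype.card G : ℂ) / V.character 1) • y := by
  obtain ⟨c, hB, htr⟩ := exists_scalar V Finset.univ (fun h => W.character h⁻¹)
    (fun x => conv_comm V W x)
  rw [orth_sum V W, if_pos hiso] at htr
  have hc : c = (Fintype.card G : ℂ) / V.character 1 :=
    (eq_div_iff (char_one_ne_zero V)).mpr htr.symm
  have happ := LinearMap.congr_fun hB y
  rw [LinearMap.sum_apply] at happ
  simp only [LinearMap.smul_apply, LinearMap.id_apply] at happ
  rw [← hc]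
  exact happ

lemma Pmat_sum {ι : Type} [Fintype ι] (rep : ι → FDRep ℂ G)
    (hsimple : ∀ i, Simple (rep i))
    (hinj : ∀ i j, Nonempty (rep i ≅ rep j) → i = j)
    (hcomplete : ∀ W : FDRep ℂ G, Simple W → ∃ i, Nonempty (W ≅ rep i)) :
    ∑ i, Pmat (rep i) = (1 : Matrix G G ℂ) := by
  have hPP : ∀ i j : ι, Pmat (rep i) * Pmat (rep j)
      = if j = i then Pmat (rep i) else 0 := by
    intro i j
    haveI := hsimple i; haveI := hsimple j
    rw [Pmat_mul (rep i) (rep j)]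
    by_cases h : Nonempty (rep j ≅ rep i)
    · rw [if_pos h, if_pos (hinj j i h)]
    · rw [if_neg h, if_neg (fun hji : j = i => h (hji ▸ ⟨Iso.refl _⟩))]
  set P : Matrix G G ℂ := ∑ i, Pmat (rep i) with hP
  set Q : Matrix G G ℂ := 1 - P with hQdef
  have hPQ : ∀ i, Pmat (rep i) * Q = 0 := by
    intro i
    rw [hQdef, Matrix.mul_sub, Matrix.mul_one, hP, Finset.mul_sum]
    have : ∑ j, Pmat (rep i) * Pmat (rep j) = Pmat (rep i) := by
      simp_rw [hPP i]
      simp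
    rw [this, sub_self]
  suffices hQzero : Q = 0 by
    exact (sub_eq_zero.mp hQzero).symm
  by_contra hQ0
  -- Q is invariant under the regular action
  have hQent : ∀ u v g : G, Q (u * g) (v * g) = Q u v := by
    intro u v g
    rw [hQdef, Matrix.sub_apply, Matrix.sub_apply]
    congr 1
    · simp [Matrix.one_apply, mul_left_inj]
    · rw [hP, Matrix.sum_apply, Matrix.sum_apply]
      exact Finset.sum_congr rfl fun i _ => Pmat_inv_entries (rep i) u v g
  set W : Submodule ℂ (G → ℂ) := LinearMap.range Q.mulVecLin with hWdef
  have hW0 : W ≠ ⊥ := by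
    intro hbot
    apply hQ0
    ext u v
    have h1 : Q.mulVecLin (Pi.single v 1) = 0 := by
      rw [← Submodule.mem_bot (R := ℂ), ← hbot]
      exact LinearMap.mem_range_self _ _
    have h2 : Q.mulVec (Pi.single v (1:ℂ)) u = Q u v := by
      rw [Matrix.mulVec, dotProduct]
      rw [Finset.sum_eq_single v]
      · simp
      · intro w _ hw
        simp [Pi.single_apply, hw]
      · intro h; exact absurd (Finset.mem_univ v) h
    rw [Matrix.mulVecLin_apply] at h1
    rw [show Q u v = Q.mulVec (Pi.single v 1) u from h2.symm, h1]
    rfl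
  have hWinv : ∀ g : G, ∀ x ∈ W, rhoReg g x ∈ W := by
    rintro g x ⟨f, rfl⟩
    refine ⟨rhoReg g f, ?_⟩
    rw [Matrix.mulVecLin_apply, Matrix.mulVecLin_apply]
    exact mulVec_rhoReg_comm Q hQent g f
  -- pick a minimal invariant nonzero submodule of W
  have hex : ∃ n : ℕ, ∃ U : Submodule ℂ (G → ℂ),
      (U ≠ ⊥ ∧ U ≤ W ∧ (∀ g : G, ∀ x ∈ U, rhoReg g x ∈ U)) ∧ Module.finrank ℂ U = n :=
    ⟨Module.finrank ℂ W, W, ⟨hW0, le_rfl, hWinv⟩, rfl⟩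
  obtain ⟨U, ⟨hU0, hUW, hUinv⟩, hUrank⟩ := Nat.find_spec hex
  have hmin := fun m (hm : m < Nat.find hex) => Nat.find_min hex hm
  -- U is irreducible
  have hirr : ∀ Z : Submodule ℂ ↥U,
      (∀ g : G, ∀ x ∈ Z, subRep rhoReg U hUinv g x ∈ Z) → Z = ⊥ ∨ Z = ⊤ := by
    intro Z hZ
    by_cases hbot : Z = ⊥
    · exact Or.inl hbot
    right
    set Z' : Submodule ℂ (G → ℂ) := Z.map U.subtype with hZ'def
    have hZ'b : Z' ≠ ⊥ := by
      intro h
      apply hbot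
      apply Submodule.map_injective_of_injective U.injective_subtype
      rw [Submodule.map_bot]
      exact h
    have hZ'le : Z' ≤ U := Submodule.map_subtype_le U Z
    have hZ'inv : ∀ g : G, ∀ x ∈ Z', rhoReg g x ∈ Z' := by
      rintro g x ⟨z, hz, rfl⟩
      exact ⟨subRep rhoReg U hUinv g z, hZ g z hz, rfl⟩
    have hge : ¬ Module.finrank ℂ Z' < Nat.find hex := fun hlt =>
      hmin _ hlt ⟨Z', ⟨hZ'b, le_trans hZ'le hUW, hZ'inv⟩, rfl⟩
    have hle : Module.finrank ℂ Z' ≤ Nat.find hex :=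
      hUrank ▸ Submodule.finrank_mono hZ'le
    have heq : Module.finrank ℂ Z' = Module.finrank ℂ U := by omega
    have hZ'U : Z' = U := Submodule.eq_of_le_of_finrank_eq hZ'le heq
    apply Submodule.map_injective_of_injective U.injective_subtype
    rw [Submodule.map_subtype_top]
    exact hZ'U
  haveI hnt : Nontrivial ↥U := Submodule.nontrivial_iff_ne_bot.mpr hU0
  haveI hSimple : Simple (FDRep.of (subRep rhoReg U hUinv)) :=
    simple_of_irreducible _ hnt hirr
  obtain ⟨i, hiso⟩ := hcomplete _ hSimple
  haveI := hsimple i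
  set XU := FDRep.of (subRep rhoReg U hUinv) with hXU
  have hchar : XU.character = (rep i).character := FDRep.char_iso (Classical.choice hiso)
  have hd : XU.character 1 = (rep i).character 1 := congrFun hchar 1
  have hd0 : (rep i).character 1 ≠ 0 := char_one_ne_zero (rep i)
  have hc0 : ((Fintype.card G : ℂ)) ≠ 0 := card_ne_zero'
  -- every element of U is fixed by Pmat (rep i)
  have hPU : ∀ y : ↥U, (Pmat (rep i)).mulVec (y : G → ℂ) = (y : G → ℂ) := by
    intro y
    have hps := pi_scalar XU (rep i) hiso y
    funext u
    rw [Pmat_mulVec]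
    have h1 : ∑ g : G, (rep i).character 1 / (Fintype.card G : ℂ) *
        (rep i).character g⁻¹ * (y : G → ℂ) (u * g)
        = ((rep i).character 1 / (Fintype.card G : ℂ)) *
          ∑ g : G, (rep i).character g⁻¹ * (y : G → ℂ) (u * g) := by
      rw [Finset.mul_sum]
      exact Finset.sum_congr rfl fun g _ => by ring
    rw [h1]
    have h2 : ∑ g : G, (rep i).character g⁻¹ * (y : G → ℂ) (u * g)
        = ((∑ g : G, (rep i).character g⁻¹ • ((XU.ρ g) y) : ↥U) : G → ℂ) u := by
      rw [Submodule.coe_sum, Finset.sum_apply]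
      refine Finset.sum_congr rfl fun g _ => ?_
      rw [Submodule.coe_smul, Pi.smul_apply, smul_eq_mul]
      rfl
    have h3 : ((∑ g : G, (rep i).character g⁻¹ • ((XU.ρ g) y) : ↥U) : G → ℂ) u
        = ((Fintype.card G : ℂ) / XU.character 1) * (y : G → ℂ) u := by
      rw [hps, Submodule.coe_smul, Pi.smul_apply, smul_eq_mul]
    rw [h2, h3, hd]
    have key : ∀ (d c z : ℂ), d ≠ 0 → c ≠ 0 → d / c * (c / d * z) = z := by
      intro d c z hdd hcc
      field_simp
    exact key _ _ _ hd0 hc0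
  -- conclusion: U is killed by Pmat (rep i), contradiction
  obtain ⟨y0, hy0⟩ := exists_ne (0 : ↥U)
  obtain ⟨f, hf⟩ := hUW y0.2
  have hzero : (Pmat (rep i)).mulVec (y0 : G → ℂ) = 0 := by
    rw [← hf, Matrix.mulVecLin_apply, Matrix.mulVec_mulVec, hPQ i, Matrix.zero_mulVec]
  have hy0z : (y0 : G → ℂ) = 0 := by rw [← hPU y0, hzero]
  exact hy0 (Subtype.ext hy0z)

end

end Stmt16Aux

namespace Stmt16Aux

noncomputable section

lemma exp_mul_eigen {m : Type} [Fintype m] [DecidableEq m] (M P : Matrix m m ℂ) (μ : ℂ)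
    (h : M * P = μ • P) : NormedSpace.exp M * P = Complex.exp μ • P := by
  letI : SeminormedRing (Matrix m m ℂ) := Matrix.linftyOpSemiNormedRing
  letI : NormedRing (Matrix m m ℂ) := Matrix.linftyOpNormedRing
  letI : NormedAlgebra ℂ (Matrix m m ℂ) := Matrix.linftyOpNormedAlgebra
  have hpow : ∀ n : ℕ, M ^ n * P = μ ^ n • P := by
    intro n
    induction n with
    | zero => simp
    | succ n ih =>
      rw [pow_succ, mul_assoc, h, Matrix.mul_smul, ih, smul_smul, ← pow_succ']
  have hs : Summable (fun n : ℕ => ((n.factorial : ℂ))⁻¹ • M ^ n) :=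
    NormedSpace.expSeries_summable' M
  have hs2 : Summable (fun n : ℕ => ((n.factorial : ℂ))⁻¹ * μ ^ n) := by
    simpa [smul_eq_mul] using NormedSpace.expSeries_summable' (𝕂 := ℂ) μ
  rw [NormedSpace.exp_eq_tsum ℂ]
  calc (∑' n : ℕ, ((n.factorial : ℂ))⁻¹ • M ^ n) * P
      = ∑' n : ℕ, (((n.factorial : ℂ))⁻¹ • M ^ n) * P := (hs.tsum_mul_right P).symm
    _ = ∑' n : ℕ, (((n.factorial : ℂ))⁻¹ * μ ^ n) • P := by
        congr 1
        funext n
        rw [smul_mul_assoc, hpow, smul_smul]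
    _ = (∑' n : ℕ, ((n.factorial : ℂ))⁻¹ * μ ^ n) • P := hs2.tsum_smul_const P
    _ = Complex.exp μ • P := by
        rw [Complex.exp_eq_exp_ℂ, NormedSpace.exp_eq_tsum ℂ]
        show _ = (∑' (n : ℕ), ((n.factorial : ℂ))⁻¹ • μ ^ n) • P
        congr 1

end

end Stmt16Aux

open CategoryTheory in
theorem stmt16' {G : Type} [Group G] [Fintype G] [DecidableEq G] (S : Finset G)
    (hinv : ∀ s ∈ S, s⁻¹ ∈ S) (h1 : (1 : G) ∉ S)
    (hconj : ∀ s ∈ S, ∀ g : G, g * s * g⁻¹ ∈ S)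
    (a : G) (ha : a ∈ Subgroup.center G) (h2 : orderOf a = 2)
    (ι : Type) [Fintype ι] (rep : ι → FDRep ℂ G)
    (hsimple : ∀ i, Simple (rep i))
    (hinj : ∀ i j, Nonempty (rep i ≅ rep j) → i = j)
    (hcomplete : ∀ W : FDRep ℂ G, Simple W → ∃ i, Nonempty (W ≅ rep i))
    (t : ℝ) (α β : ℂ)
    (hplus : ∀ i, (rep i).character a = (rep i).character 1 →
      Complex.exp (Complex.I * (t : ℂ) *
        (((rep i).character 1)⁻¹ * ∑ s ∈ S, (rep i).character s)) = α + β)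
    (hminus : ∀ i, (rep i).character a = -(rep i).character 1 →
      Complex.exp (Complex.I * (t : ℂ) *
        (((rep i).character 1)⁻¹ * ∑ s ∈ S, (rep i).character s)) = α - β) :
    ∀ u : G,
      NormedSpace.exp ((Complex.I * (t : ℂ)) • cayleyAdjAux S) u u = α ∧
      NormedSpace.exp ((Complex.I * (t : ℂ)) • cayleyAdjAux S) u (u * a) = β := by
  classical
  intro u
  have hsumP := Stmt16Aux.Pmat_sum rep hsimple hinj hcomplete
  have haa : a * a = 1 := by
    have h := pow_orderOf_eq_one a
    rwa [h2, pow_two] at h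
  have hainv : a⁻¹ = a := inv_eq_of_mul_eq_one_right haa
  have ha' : ∀ g : G, a * g = g * a := fun g => (Subgroup.mem_center_iff.mp ha g).symm
  have hane : a ≠ 1 := by
    intro h
    rw [h, orderOf_one] at h2
    exact absurd h2 (by norm_num)
  have hd0 : ∀ i, (rep i).character 1 ≠ 0 := fun i => by
    haveI := hsimple i; exact Stmt16Aux.char_one_ne_zero (rep i)
  set c : ℂ := (Fintype.card G : ℂ) with hcdef
  set μ : ι → ℂ := fun i => Complex.I * (t : ℂ) *
    (((rep i).character 1)⁻¹ * ∑ s ∈ S, (rep i).character s) with hμ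
  set E : Matrix G G ℂ := NormedSpace.exp ((Complex.I * (t : ℂ)) • cayleyAdjAux S) with hE
  have hMP : ∀ i, ((Complex.I * (t : ℂ)) • cayleyAdjAux S) * Stmt16Aux.Pmat (rep i)
      = μ i • Stmt16Aux.Pmat (rep i) := by
    intro i
    haveI := hsimple i
    rw [Matrix.smul_mul, Stmt16Aux.A_mul_Pmat S hconj (rep i), smul_smul]
  have hexp : E = ∑ i, Complex.exp (μ i) • Stmt16Aux.Pmat (rep i) := by
    calc E = E * 1 := (mul_one _).symm
      _ = E * ∑ i, Stmt16Aux.Pmat (rep i) := by rw [hsumP]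
      _ = ∑ i, E * Stmt16Aux.Pmat (rep i) := Finset.mul_sum _ _ _
      _ = ∑ i, Complex.exp (μ i) • Stmt16Aux.Pmat (rep i) :=
          Finset.sum_congr rfl fun i _ => Stmt16Aux.exp_mul_eigen _ _ _ (hMP i)
  have hpm : ∀ i, (rep i).character a = (rep i).character 1 ∨
      (rep i).character a = -(rep i).character 1 := fun i => by
    haveI := hsimple i
    exact Stmt16Aux.char_pm (rep i) a ha' haa
  have hEexp : ∀ i, Complex.exp (μ i)
      = α + ((rep i).character a / (rep i).character 1) * β := by
    intro i
    rcases hpm i with h | h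
    · rw [hμ, hplus i h, h, div_self (hd0 i), one_mul]
    · rw [hμ, hminus i h, h, neg_div, div_self (hd0 i)]
      ring
  have hEa : ∀ i, ((rep i).character a / (rep i).character 1) * (rep i).character a
      = (rep i).character 1 := by
    intro i
    rcases hpm i with h | h
    · rw [h, div_self (hd0 i), one_mul]
    · rw [h, neg_div, div_self (hd0 i)]
      ring
  have hent : ∀ w : G, ∑ i, (rep i).character 1 / c * (rep i).character w
      = if w = 1 then 1 else 0 := by
    intro w
    have h := congrFun (congrFun hsumP w) 1
    rw [Matrix.sum_apply] at h
    have hl : ∀ i, Stmt16Aux.Pmat (rep i) w 1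
        = (rep i).character 1 / c * (rep i).character w := by
      intro i
      unfold Stmt16Aux.Pmat
      rw [show w * (1 : G)⁻¹ = w by group]
    rw [Finset.sum_congr rfl (fun i _ => hl i)] at h
    rw [h, Matrix.one_apply]
  have h11 : ∑ i, (rep i).character 1 / c * (rep i).character 1 = 1 := by
    rw [hent 1, if_pos rfl]
  have hZa : ∑ i, (rep i).character 1 / c * (rep i).character a = 0 := by
    rw [hent a, if_neg hane]
  constructor
  · rw [show E u u = α from ?_]
    rw [hexp, Matrix.sum_apply]
    have hterm : ∀ i, (Complex.exp (μ i) • Stmt16Aux.Pmat (rep i)) u u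
        = α * ((rep i).character 1 / c * (rep i).character 1)
          + β * ((rep i).character 1 / c * (rep i).character a) := by
      intro i
      rw [Matrix.smul_apply]
      unfold Stmt16Aux.Pmat
      rw [show u * u⁻¹ = (1 : G) by group, hEexp i, smul_eq_mul]
      have hax : (rep i).character a / (rep i).character 1 * (rep i).character 1
          = (rep i).character a := div_mul_cancel₀ _ (hd0 i)
      calc (α + (rep i).character a / (rep i).character 1 * β) *
            ((rep i).character 1 / c * (rep i).character 1)
          = α * ((rep i).character 1 / c * (rep i).character 1)
            + β * ((rep i).character 1 / c *
              ((rep i).character a / (rep i).character 1 * (rep i).character 1)) := by ring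
        _ = _ := by rw [hax]
    rw [Finset.sum_congr rfl (fun i _ => hterm i), Finset.sum_add_distrib,
      ← Finset.mul_sum, ← Finset.mul_sum, h11, hZa, mul_one, mul_zero, add_zero]
  · rw [show E u (u * a) = β from ?_]
    rw [hexp, Matrix.sum_apply]
    have hcA : ∀ i, (rep i).character (u * (u * a)⁻¹) = (rep i).character a := by
      intro i
      rw [show u * (u * a)⁻¹ = u * a⁻¹ * u⁻¹ by group, FDRep.char_conj, hainv]
    have hterm : ∀ i, (Complex.exp (μ i) • Stmt16Aux.Pmat (rep i)) u (u * a)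
        = α * ((rep i).character 1 / c * (rep i).character a)
          + β * ((rep i).character 1 / c * (rep i).character 1) := by
      intro i
      rw [Matrix.smul_apply]
      unfold Stmt16Aux.Pmat
      rw [hcA i, hEexp i, smul_eq_mul]
      calc (α + (rep i).character a / (rep i).character 1 * β) *
            ((rep i).character 1 / c * (rep i).character a)
          = α * ((rep i).character 1 / c * (rep i).character a)
            + β * ((rep i).character 1 / c *
              ((rep i).character a / (rep i).character 1 * (rep i).character a)) := by ring
        _ = _ := by rw [hEa i]
    rw [Finset.sum_congr rfl (fun i _ => hterm i), Finset.sum_add_distrib,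
      ← Finset.mul_sum, ← Finset.mul_sum, h11, hZa, mul_zero, mul_one, zero_add]


/-- Let `a` be a central element of order 2 in a finite group `G`, and let `S`
be a union of conjugacy classes with `1 ∉ S`, `S⁻¹ = S`. If for every
irreducible character `χ` one has `exp(it λ_χ) = α + β` when `χ(a) = χ(1)` and
`exp(it λ_χ) = α - β` when `χ(a) = -χ(1)`, then the transition matrix
`H(t) = exp(itA)` of `Cay(G, S)` satisfies `H(t)_{u,u} = α` and
`H(t)_{u,ua} = β` for every `u ∈ G`. -/
theorem stmt16 {G : Type} [Group G] [Fintype G] [DecidableEq G] (S : Finset G)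
    (hinv : ∀ s ∈ S, s⁻¹ ∈ S) (h1 : (1 : G) ∉ S)
    (hconj : ∀ s ∈ S, ∀ g : G, g * s * g⁻¹ ∈ S)
    (a : G) (ha : a ∈ Subgroup.center G) (h2 : orderOf a = 2)
    (ι : Type) [Fintype ι] (rep : ι → FDRep ℂ G)
    (hsimple : ∀ i, Simple (rep i))
    (hinj : ∀ i j, Nonempty (rep i ≅ rep j) → i = j)
    (hcomplete : ∀ W : FDRep ℂ G, Simple W → ∃ i, Nonempty (W ≅ rep i))
    (t : ℝ) (α β : ℂ)
    (hplus : ∀ i, (rep i).character a = (rep i).character 1 →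
      Complex.exp (Complex.I * (t : ℂ) *
        (((rep i).character 1)⁻¹ * ∑ s ∈ S, (rep i).character s)) = α + β)
    (hminus : ∀ i, (rep i).character a = -(rep i).character 1 →
      Complex.exp (Complex.I * (t : ℂ) *
        (((rep i).character 1)⁻¹ * ∑ s ∈ S, (rep i).character s)) = α - β) :
    ∀ u : G,
      NormedSpace.exp ((Complex.I * (t : ℂ)) • cayleyAdj S) u u = α ∧
      NormedSpace.exp ((Complex.I * (t : ℂ)) • cayleyAdj S) u (u * a) = β := by
  intro u
  exact stmt16' S hinv h1 hconj a ha h2 ι rep hsimple hinj hcomplete t α β hplus hminus u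
end
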